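/- Let n = p₁⋯p_K with primes p₁ < ⋯ < p_K, fix s, let q be a prime with q > p_s and q ∉ {p_{s+1},…,p_K}, and set m = n/p_s. If Ψ(n) ≥ φ(n) + Δ for some Δ ≥ 0, then Ψ(qm) ≥ φ(qm) + Δ, where φ is Euler's totient function. -/

import Mathlib

/-!
Write each `pm`-th root of unity uniquely as `ζ_p ^ a * ω ^ b` with `a < p`, `b < m`, where `ω`
is a primitive `m`-th root, and send it to `ζ_q ^ a * ω ^ b`. The image of a maximal
quasi-independent set `E` of `pm`-th roots, together with the `(q - p) φ(m)` roots
`ζ_q ^ a * ω ^ b` with `p ≤ a < q` and `b < φ(m)`, is quasi-independent. Indeed, grouping a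
vanishing signed sum by powers of `ζ_q` gives `∑_{a<q} S_a ζ_q ^ a = 0` with `S_a ∈ ℚ(ω)`, and
since `ζ_q` has degree `q - 1` over `ℚ(ω)` all `S_a` are equal, to `S` say. For `a < p` only `E`
contributes to `S_a`, so the same signs give the vanishing sum `S ∑_{a<p} ζ_p ^ a = 0` over `E`
and must be zero; hence `S = S_0 = 0`, and for `p ≤ a < q` the linear independence of
`1, ω, …, ω ^ (φ(m) - 1)` over `ℚ` kills the remaining signs. Thus
`Ψ(qm) ≥ Ψ(pm) + (q - p) φ(m)`, while `φ(qm) = φ(pm) + (q - p) φ(m)`.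
-/

def QuasiIndep (S : Set ℂ) : Prop :=
  ∀ (s : Finset ℂ) (ε : ℂ → ℤ), ↑s ⊆ S →
    (∀ z ∈ s, ε z = 0 ∨ ε z = 1 ∨ ε z = -1) →
    (∑ z ∈ s, (ε z : ℂ) * z) = 0 → ∀ z ∈ s, ε z = 0

/-- `Psi N` is the maximal cardinality of a quasi-independent set of N-th roots of unity. -/
noncomputable def Psi (N : ℕ) : ℕ :=
  sSup {k | ∃ E : Finset ℂ, (∀ z ∈ E, z ^ N = 1) ∧ QuasiIndep ↑E ∧ E.card = k}

open Finset Polynomial IntermediateField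

def QuasiIndepOn {α : Type*} (f : α → ℂ) (T : Finset α) : Prop :=
  ∀ c : α → ℤ, (∀ t ∈ T, c t = 0 ∨ c t = 1 ∨ c t = -1) →
    ∑ t ∈ T, (c t : ℂ) * f t = 0 → ∀ t ∈ T, c t = 0

theorem quasiIndep_image_iff {α : Type*} [DecidableEq ℂ] {f : α → ℂ} {T : Finset α}
    (hf : Set.InjOn f T) : QuasiIndep ↑(T.image f) ↔ QuasiIndepOn f T := by
  constructor
  · intro h c hc hsum t ht
    have : Nonempty α := ⟨t⟩
    have hinv : ∀ t ∈ T, Function.invFunOn f T (f t) = t := fun t ht ↦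
      hf.leftInvOn_invFunOn ht
    have := h (T.image f) (fun z ↦ c (Function.invFunOn f T z)) subset_rfl
      (forall_mem_image.2 fun t ht ↦ by simpa only [hinv t ht] using hc t ht)
      (by rw [sum_image hf, ← hsum]; exact sum_congr rfl fun t ht ↦ by rw [hinv t ht])
      (f t) (mem_image_of_mem f ht)
    rwa [hinv t ht] at this
  · intro h s ε hs hε hsum
    have hs' : s ⊆ T.image f := by exact_mod_cast hs
    have hc := h (fun t ↦ if f t ∈ s then ε (f t) else 0)
      (fun t _ ↦ by split_ifs with hts; exacts [hε _ hts, Or.inl rfl])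
      (by
        rw [← sum_image (f := fun z ↦ ((if z ∈ s then ε z else 0 : ℤ) : ℂ) * z) hf,
          ← sum_subset hs' fun z _ hz ↦ by simp [hz], ← hsum]
        exact sum_congr rfl fun z hz ↦ by simp [hz])
    intro z hz
    obtain ⟨t, ht, rfl⟩ := mem_image.1 (hs' hz)
    simpa [hz] using hc t ht

theorem bddAbove_Psi {N : ℕ} (hN : N ≠ 0) :
    BddAbove {k | ∃ E : Finset ℂ, (∀ z ∈ E, z ^ N = 1) ∧ QuasiIndep ↑E ∧ E.card = k} := by
  refine ⟨N, ?_⟩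
  rintro k ⟨E, hE, -, rfl⟩
  rw [← (Complex.isPrimitiveRoot_exp N hN).card_nthRootsFinset]
  exact card_le_card fun z hz ↦ (mem_nthRootsFinset (Nat.pos_of_ne_zero hN) 1).2 (hE z hz)

theorem card_le_Psi {N : ℕ} (hN : N ≠ 0) {E : Finset ℂ} (hE : ∀ z ∈ E, z ^ N = 1)
    (hqi : QuasiIndep ↑E) : E.card ≤ Psi N :=
  le_csSup (bddAbove_Psi hN) ⟨E, hE, hqi, rfl⟩

theorem exists_card_eq_Psi {N : ℕ} (hN : N ≠ 0) :
    ∃ E : Finset ℂ, (∀ z ∈ E, z ^ N = 1) ∧ QuasiIndep ↑E ∧ E.card = Psi N := by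
  refine Nat.sSup_mem ?_ (bddAbove_Psi hN)
  exact ⟨0, ∅, by simp, fun _ _ hs _ _ z hz ↦ by simpa using hs hz, rfl⟩

theorem eq_zero_of_sum_smul_pow_eq_zero {K L : Type*} [Field K] [CommRing L] [Algebra K L]
    {x : L} {c : ℕ → K} (h : ∑ i ∈ range (minpoly K x).natDegree, c i • x ^ i = 0) {i : ℕ}
    (hi : i < (minpoly K x).natDegree) : c i = 0 :=
  Fintype.linearIndependent_iff.1 (linearIndependent_pow x) (c ·)
    (by rwa [Fin.sum_univ_eq_sum_range (fun i ↦ c i • x ^ i)]) ⟨i, hi⟩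

namespace IsPrimitiveRoot

variable {p q m : ℕ}

theorem injOn_pow_mul_pow {M : Type*} [CommMonoid M] {ζ ω : M} (hζ : IsPrimitiveRoot ζ p)
    (hω : IsPrimitiveRoot ω m) (hpm : p.Coprime m) :
    Set.InjOn (fun t : ℕ × ℕ ↦ ζ ^ t.1 * ω ^ t.2) ↑(range p ×ˢ range m) := by
  rintro ⟨a, b⟩ hab ⟨a', b'⟩ hab' h
  simp only [coe_product, coe_range, Set.mem_prod, Set.mem_Iio] at hab hab' h
  have hpow : ∀ (x y : M) (k l : ℕ), y ^ l = 1 → (x ^ k * y) ^ l = (x ^ l) ^ k :=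
    fun x y k l hy ↦ by rw [mul_pow, hy, mul_one, pow_right_comm]
  have hζp : ∀ k, (ζ ^ k) ^ p = 1 := fun k ↦ by rw [pow_right_comm, hζ.pow_eq_one, one_pow]
  have hωm : ∀ k, (ω ^ k) ^ m = 1 := fun k ↦ by rw [pow_right_comm, hω.pow_eq_one, one_pow]
  have ha : (ζ ^ m) ^ a = (ζ ^ m) ^ a' := by
    rw [← hpow ζ _ a m (hωm b), h, hpow ζ _ a' m (hωm b')]
  have hb : (ω ^ p) ^ b = (ω ^ p) ^ b' := by
    rw [← hpow ω _ b p (hζp a), mul_comm, h, mul_comm, hpow ω _ b' p (hζp a')]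
  rw [(hζ.pow_of_coprime m hpm.symm).pow_inj hab.1 hab'.1 ha,
    (hω.pow_of_coprime p hpm).pow_inj hab.2 hab'.2 hb]

theorem image_pow_mul_pow {R : Type*} [CommRing R] [IsDomain R] [DecidableEq R] {ζ ω : R}
    (hζ : IsPrimitiveRoot ζ p) (hω : IsPrimitiveRoot ω m) (hpm : p.Coprime m) :
    (range p ×ˢ range m).image (fun t : ℕ × ℕ ↦ ζ ^ t.1 * ω ^ t.2) =
      nthRootsFinset (p * m) (1 : R) := by
  rcases (p * m).eq_zero_or_pos with h0 | hpos
  · obtain rfl | rfl := Nat.mul_eq_zero.1 h0 <;> simp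
  have hζω : IsPrimitiveRoot (ζ * ω) (p * m) := by
    rw [IsPrimitiveRoot.iff_orderOf, (Commute.all ζ ω).orderOf_mul_eq_mul_orderOf_of_coprime
      (by rwa [← hζ.eq_orderOf, ← hω.eq_orderOf]), ← hζ.eq_orderOf, ← hω.eq_orderOf]
  refine eq_of_subset_of_card_le (forall_mem_image.2 fun t _ ↦ ?_) ?_
  · rw [Polynomial.mem_nthRootsFinset hpos, mul_pow, ← pow_mul, ← pow_mul,
      (hζ.pow_eq_one_iff_dvd _).2 ((dvd_mul_right p m).mul_left t.1),
      (hω.pow_eq_one_iff_dvd _).2 ((dvd_mul_left m p).mul_left t.2), one_mul]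
  · rw [hζω.card_nthRootsFinset, card_image_of_injOn (hζ.injOn_pow_mul_pow hω hpm),
      card_product, card_range, card_range]

variable {L : Type*} [Field L] [CharZero L] {ζ ω : L}

theorem eq_zero_of_sum_intCast_mul_pow (hω : IsPrimitiveRoot ω m) (hm : 0 < m) {c : ℕ → ℤ}
    (h : ∑ b ∈ range m.totient, (c b : L) * ω ^ b = 0) {b : ℕ} (hb : b < m.totient) :
    c b = 0 := by
  have hdeg : (minpoly ℚ ω).natDegree = m.totient := by
    rw [← cyclotomic_eq_minpoly_rat hω hm, natDegree_cyclotomic]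
  have := eq_zero_of_sum_smul_pow_eq_zero (c := fun b ↦ (c b : ℚ)) (by
    rw [hdeg, ← h]
    exact sum_congr rfl fun b _ ↦ by simp [Rat.smul_def]) (hdeg ▸ hb)
  exact_mod_cast this

theorem natDegree_minpoly_adjoin (hζ : IsPrimitiveRoot ζ q) (hω : IsPrimitiveRoot ω m)
    (hq : 0 < q) (hm : 0 < m) (hqm : q.Coprime m) :
    (minpoly ℚ⟮ω⟯ ζ).natDegree = q.totient := by
  set K := ℚ⟮ω⟯
  have hωint : IsIntegral ℚ ω := (hω.isIntegral hm).tower_top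
  have hζint : IsIntegral K ζ := (hζ.isIntegral hq).tower_top
  refine le_antisymm ?_ ?_
  · have hdvd : minpoly K ζ ∣ cyclotomic q K := minpoly.dvd K ζ (by
      rw [aeval_def, eval₂_eq_eval_map, map_cyclotomic]; exact hζ.isRoot_cyclotomic hq)
    exact (natDegree_le_of_dvd hdvd (cyclotomic_ne_zero q K)).trans_eq
      (natDegree_cyclotomic q K)
  · set L' := K⟮ζ⟯
    have : FiniteDimensional ℚ K := adjoin.finiteDimensional hωint
    have : FiniteDimensional K L' := adjoin.finiteDimensional hζint
    have : FiniteDimensional ℚ L' := FiniteDimensional.trans ℚ K L'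
    have : Module.Free K L' := Module.Free.of_divisionRing K L'
    have hζ' : IsPrimitiveRoot (⟨ζ, mem_adjoin_simple_self K ζ⟩ : L') q :=
      hζ.of_map_of_injective (f := algebraMap L' L) (algebraMap L' L).injective
    have hω' :
        IsPrimitiveRoot (⟨ω, L'.algebraMap_mem ⟨ω, mem_adjoin_simple_self ℚ ω⟩⟩ : L') m :=
      hω.of_map_of_injective (f := algebraMap L' L) (algebraMap L' L).injective
    have hlcm : q.lcm m = q * m := hqm.lcm_eq_mul
    have hle := hζ'.lcm_totient_le_finrank (K := ℚ) hω'
      (cyclotomic.irreducible_rat (hlcm ▸ Nat.mul_pos hq hm))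
    rw [hlcm, Nat.totient_mul hqm, ← Module.finrank_mul_finrank ℚ K L',
      adjoin.finrank hωint, adjoin.finrank hζint, ← cyclotomic_eq_minpoly_rat hω hm,
      natDegree_cyclotomic, mul_comm] at hle
    exact Nat.le_of_mul_le_mul_left hle (Nat.totient_pos.2 hm)

theorem eq_of_sum_mul_pow_eq_zero (hζ : IsPrimitiveRoot ζ q) (hω : IsPrimitiveRoot ω m)
    (hq : q.Prime) (hm : 0 < m) (hqm : q.Coprime m) {c : ℕ → L} (hc : ∀ a, c a ∈ ℚ⟮ω⟯)
    (h : ∑ a ∈ range q, c a * ζ ^ a = 0) {a : ℕ} (ha : a < q) : c a = c (q - 1) := by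
  have hdeg : (minpoly ℚ⟮ω⟯ ζ).natDegree = q - 1 := by
    rw [hζ.natDegree_minpoly_adjoin hω hq.pos hm hqm, Nat.totient_prime hq]
  have hrel : ∑ b ∈ range (q - 1), (c b - c (q - 1)) * ζ ^ b = 0 := by
    have hgeom := hζ.geom_sum_eq_zero hq.one_lt
    have hsplit := sum_range_succ (fun b ↦ (c b - c (q - 1)) * ζ ^ b) (q - 1)
    rw [Nat.sub_add_cancel hq.one_le, sub_self, zero_mul, add_zero] at hsplit
    rw [← hsplit]
    simp only [sub_mul, sum_sub_distrib, ← mul_sum, h, hgeom, mul_zero, sub_zero]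
  rcases (Nat.le_sub_one_of_lt ha).lt_or_eq with ha | rfl
  · have := eq_zero_of_sum_smul_pow_eq_zero
      (c := fun b ↦ (⟨c b - c (q - 1), sub_mem (hc b) (hc (q - 1))⟩ : ℚ⟮ω⟯))
      (by rw [hdeg, ← hrel]; rfl) (hdeg ▸ ha)
    exact sub_eq_zero.1 (congrArg Subtype.val this)
  · rfl

end IsPrimitiveRoot

theorem sum_mul_pow_mul_pow_eq_sum_range {R : Type*} [CommSemiring R] {U : Finset (ℕ × ℕ)}
    {n : ℕ} (hU : ∀ t ∈ U, t.1 < n) (f : ℕ × ℕ → R) (x y : R) :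
    ∑ t ∈ U, f t * (x ^ t.1 * y ^ t.2) =
      ∑ a ∈ range n, (∑ t ∈ U with t.1 = a, f t * y ^ t.2) * x ^ a := by
  rw [← sum_fiberwise_of_maps_to fun t ht ↦ mem_range.2 (hU t ht)]
  refine sum_congr rfl fun a _ ↦ ?_
  rw [sum_mul]
  refine sum_congr rfl fun t ht ↦ ?_
  rw [(mem_filter.1 ht).2]
  ring

section UnionIco

variable {T : Finset (ℕ × ℕ)} {p q k a : ℕ}

theorem filter_fst_union_Ico_product_of_lt (ha : a < p) :
    (T ∪ Ico p q ×ˢ range k).filter (·.1 = a) = T.filter (·.1 = a) := by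
  rw [filter_union, union_eq_left.2 fun t ht ↦ ?_]
  have := (mem_Ico.1 (mem_product.1 (mem_filter.1 ht).1).1).1
  have := (mem_filter.1 ht).2
  omega

theorem filter_fst_union_Ico_product_of_le (hT : ∀ t ∈ T, t.1 < p) (hpa : p ≤ a) (haq : a < q) :
    (T ∪ Ico p q ×ˢ range k).filter (·.1 = a) = {a} ×ˢ range k := by
  rw [filter_union, filter_eq_empty_iff (s := T).2 fun t ht hta ↦ by have := hT t ht; omega,
    empty_union, filter_product_left (· = a), filter_eq', if_pos (mem_Ico.2 ⟨hpa, haq⟩)]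

end UnionIco

theorem QuasiIndepOn.union_Ico {p q m : ℕ} {ζp ζq ω : ℂ} (hζp : IsPrimitiveRoot ζp p)
    (hp : 1 < p) (hζq : IsPrimitiveRoot ζq q) (hq : q.Prime) (hpq : p < q)
    (hω : IsPrimitiveRoot ω m) (hm : 0 < m) (hqm : q.Coprime m) {T : Finset (ℕ × ℕ)}
    (hT : ∀ t ∈ T, t.1 < p) (hE : QuasiIndepOn (fun t ↦ ζp ^ t.1 * ω ^ t.2) T) :
    QuasiIndepOn (fun t ↦ ζq ^ t.1 * ω ^ t.2) (T ∪ Ico p q ×ˢ range m.totient) := by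
  intro c hc hsum
  beta_reduce at hsum
  set U := T ∪ Ico p q ×ˢ range m.totient
  have hU : ∀ t ∈ U, t.1 < q := fun t ht ↦ (mem_union.1 ht).elim
    (fun ht ↦ (hT t ht).trans hpq) fun ht ↦ (mem_Ico.1 (mem_product.1 ht).1).2
  set S : ℕ → ℂ := fun a ↦ ∑ t ∈ U with t.1 = a, (c t : ℂ) * ω ^ t.2
  have hSeq : ∀ a < q, S a = S (q - 1) := fun a ha ↦
    hζq.eq_of_sum_mul_pow_eq_zero hω hq hm hqm
      (fun a ↦ sum_mem fun t _ ↦ mul_mem (intCast_mem _ _) (pow_mem (mem_adjoin_simple_self ℚ ω) _))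
      ((sum_mul_pow_mul_pow_eq_sum_range hU (fun t ↦ (c t : ℂ)) ζq ω).symm.trans hsum) ha
  have hS_lt : ∀ a < p, S a = ∑ t ∈ T with t.1 = a, (c t : ℂ) * ω ^ t.2 := fun a ha ↦ by
    simp only [S, U, filter_fst_union_Ico_product_of_lt ha]
  have hT0 : ∀ t ∈ T, c t = 0 := by
    refine hE c (fun t ht ↦ hc t (mem_union_left _ ht)) ?_
    calc ∑ t ∈ T, (c t : ℂ) * (ζp ^ t.1 * ω ^ t.2) = ∑ a ∈ range p, S a * ζp ^ a := by
          rw [sum_mul_pow_mul_pow_eq_sum_range hT]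
          exact sum_congr rfl fun a ha ↦ by rw [hS_lt a (mem_range.1 ha)]
      _ = S (q - 1) * ∑ a ∈ range p, ζp ^ a := by
          rw [mul_sum]
          exact sum_congr rfl fun a ha ↦ by rw [hSeq a ((mem_range.1 ha).trans hpq)]
      _ = 0 := by rw [hζp.geom_sum_eq_zero hp, mul_zero]
  have hS0 : S (q - 1) = 0 := by
    rw [← hSeq 0 hq.pos, hS_lt 0 (by omega)]
    exact sum_eq_zero fun t ht ↦ by rw [hT0 t (mem_filter.1 ht).1, Int.cast_zero, zero_mul]
  intro t ht
  rcases mem_union.1 ht with ht | ht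
  · exact hT0 t ht
  obtain ⟨ha, hb⟩ := mem_product.1 ht
  obtain ⟨hpa, haq⟩ := mem_Ico.1 ha
  have hrel : ∑ b ∈ range m.totient, (c (t.1, b) : ℂ) * ω ^ b = 0 := by
    rw [← hS0, ← hSeq t.1 haq]
    simp only [S, U, filter_fst_union_Ico_product_of_le hT hpa haq, sum_product, sum_singleton]
  exact hω.eq_zero_of_sum_intCast_mul_pow hm hrel (mem_range.1 hb)

section RootsOfUnity

variable {p m : ℕ} {ζ ω : ℂ}

theorem exists_quasiIndepOn_of_quasiIndep (hζ : IsPrimitiveRoot ζ p) (hω : IsPrimitiveRoot ω m)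
    (hpm : p.Coprime m) (hpm0 : p * m ≠ 0) {E : Finset ℂ} (hEroot : ∀ z ∈ E, z ^ (p * m) = 1)
    (hE : QuasiIndep ↑E) :
    ∃ T ⊆ range p ×ˢ range m, T.card = E.card ∧ QuasiIndepOn (fun t ↦ ζ ^ t.1 * ω ^ t.2) T := by
  classical
  set T := (range p ×ˢ range m).filter (fun t ↦ ζ ^ t.1 * ω ^ t.2 ∈ E)
  have hTE : T.image (fun t ↦ ζ ^ t.1 * ω ^ t.2) = E := by
    simp only [T]
    rw [← filter_image (p := (· ∈ E)), hζ.image_pow_mul_pow hω hpm, filter_mem_eq_inter,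
      inter_eq_right]
    exact fun z hz ↦ (mem_nthRootsFinset (Nat.pos_of_ne_zero hpm0) 1).2 (hEroot z hz)
  have hTsub : T ⊆ range p ×ˢ range m := filter_subset _ _
  have hTinj := (hζ.injOn_pow_mul_pow hω hpm).mono (coe_subset.2 hTsub)
  exact ⟨T, hTsub, by rw [← hTE, card_image_of_injOn hTinj],
    (quasiIndep_image_iff hTinj).1 (hTE ▸ hE)⟩

theorem card_le_Psi_of_quasiIndepOn (hζ : IsPrimitiveRoot ζ p) (hω : IsPrimitiveRoot ω m)
    (hpm : p.Coprime m) (hpm0 : p * m ≠ 0) {U : Finset (ℕ × ℕ)} (hU : U ⊆ range p ×ˢ range m)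
    (hUqi : QuasiIndepOn (fun t ↦ ζ ^ t.1 * ω ^ t.2) U) : U.card ≤ Psi (p * m) := by
  classical
  have hUinj := (hζ.injOn_pow_mul_pow hω hpm).mono (coe_subset.2 hU)
  rw [← card_image_of_injOn hUinj]
  refine card_le_Psi hpm0 (fun z hz ↦ ?_) ((quasiIndep_image_iff hUinj).2 hUqi)
  have := image_subset_image hU hz
  rw [hζ.image_pow_mul_pow hω hpm] at this
  exact (mem_nthRootsFinset (Nat.pos_of_ne_zero hpm0) 1).1 this

end RootsOfUnity

theorem Psi_mul_add_le_Psi_mul {p q m : ℕ} (hp : 1 < p) (hq : q.Prime) (hpq : p < q)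
    (hm : 0 < m) (hpm : p.Coprime m) (hqm : q.Coprime m) :
    Psi (p * m) + (q - p) * m.totient ≤ Psi (q * m) := by
  obtain ⟨ζp, hζp⟩ : ∃ ζ : ℂ, IsPrimitiveRoot ζ p :=
    ⟨_, Complex.isPrimitiveRoot_exp p (by omega)⟩
  obtain ⟨ζq, hζq⟩ : ∃ ζ : ℂ, IsPrimitiveRoot ζ q :=
    ⟨_, Complex.isPrimitiveRoot_exp q hq.ne_zero⟩
  obtain ⟨ω, hω⟩ : ∃ ω : ℂ, IsPrimitiveRoot ω m := ⟨_, Complex.isPrimitiveRoot_exp m hm.ne'⟩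
  have hpm0 : p * m ≠ 0 := Nat.mul_ne_zero (by omega) hm.ne'
  obtain ⟨E, hEroot, hEqi, hEcard⟩ := exists_card_eq_Psi hpm0
  obtain ⟨T, hTsub, hTcard, hTqi⟩ :=
    exists_quasiIndepOn_of_quasiIndep hζp hω hpm hpm0 hEroot hEqi
  have hT : ∀ t ∈ T, t.1 < p := fun t ht ↦ mem_range.1 (mem_product.1 (hTsub ht)).1
  have hdisj : Disjoint T (Ico p q ×ˢ range m.totient) := disjoint_left.2 fun t ht ht' ↦ by
    have := hT t ht
    have := (mem_Ico.1 (mem_product.1 ht').1).1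
    omega
  have hUsub : T ∪ Ico p q ×ˢ range m.totient ⊆ range q ×ˢ range m :=
    union_subset (hTsub.trans (product_subset_product_left (range_subset_range.2 hpq.le)))
      (product_subset_product (fun a ha ↦ mem_range.2 (mem_Ico.1 ha).2)
        (range_subset_range.2 (Nat.totient_le m)))
  have hle := card_le_Psi_of_quasiIndepOn hζq hω hqm (Nat.mul_ne_zero hq.ne_zero hm.ne') hUsub
    (hTqi.union_Ico hζp hp hζq hq hpq hω hm hqm hT)
  rwa [card_union_of_disjoint hdisj, hTcard, hEcard, card_product, Nat.card_Ico,
    card_range] at hle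

theorem stmt_16_general (n p q m Δ : ℕ) (hsf : Squarefree n)
    (hp : p.Prime) (hpn : p ∣ n) (hm : m = n / p)
    (hq : q.Prime) (hpq : p < q) (hqm : ¬ q ∣ m)
    (hΨ : Nat.totient n + Δ ≤ Psi n) :
    Nat.totient (q * m) + Δ ≤ Psi (q * m) := by
  obtain ⟨k, rfl⟩ := hpn
  rw [Nat.mul_div_cancel_left k hp.pos] at hm
  subst hm
  have hpm : p.Coprime m := Nat.coprime_of_squarefree_mul hsf
  have hqm' : q.Coprime m := hq.coprime_iff_not_dvd.2 hqm
  have hm0 : 0 < m := Nat.pos_of_ne_zero (right_ne_zero_of_mul hsf.ne_zero)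
  have key := Psi_mul_add_le_Psi_mul hp.one_lt hq hpq hm0 hpm hqm'
  have hsplit : q - 1 = (p - 1) + (q - p) := by have := hp.one_lt; omega
  rw [Nat.totient_mul hpm, Nat.totient_prime hp] at hΨ
  rw [Nat.totient_mul hqm', Nat.totient_prime hq, hsplit, add_mul]
  omega

theorem stmt_16 (n p q m Δ : ℕ) (hn : 1 < n) (hsf : Squarefree n)
    (hp : p.Prime) (hpn : p ∣ n) (hm : m = n / p)
    (hq : q.Prime) (hpq : p < q) (hqm : ¬ q ∣ m)
    (hΨ : Nat.totient n + Δ ≤ Psi n) :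
    Nat.totient (q * m) + Δ ≤ Psi (q * m) :=
  stmt_16_general n p q m Δ hsf hp hpn hm hq hpq hqm hΨ
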